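/- arXiv:0905.2619 — 4 statements merged into one kernel-verified Lean document; each statement's English description precedes it below -/
import Mathlib

section
/- Let F : ℝ × ℂ → ℂ be three times continuously differentiable (in the real sense) and, for each fixed ρ ∈ ℝ, holomorphic in λ. Assume F(0, λ) = 0 for all λ ∈ ℂ, and let τ₀ ∈ ℝ, τ₀ ≠ 0, be such that ∂ρF(0, iτ₀) = 0 and ∂λ∂ρF(0, iτ₀) ≠ 0. Then there exist ρ₀ > 0 and a continuously differentiable function λ* : (−ρ₀, ρ₀) → ℂ with λ*(0) = iτ₀, F(ρ, λ*(ρ)) = 0 for all |ρ| < ρ₀, and (λ*)′(0) = −(1/2) ∂ρ²F(0, iτ₀) / ∂λ∂ρF(0, iτ₀). Moreover the branch is locally unique: there is δ > 0 such that if 0 < |ρ| < δ, |λ − iτ₀| < δ and F(ρ, λ) = 0, then λ = λ*(ρ). -/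
/-!
Since `F (0, ·) ≡ 0`, Hadamard's lemma factors `F (ρ, λ) = ρ • G (ρ, λ)` with
`G (ρ, λ) = ∫₀¹ ∂ρF (tρ, λ) dt`, a `C¹` function with `G (0, λ) = ∂ρF (0, λ)` and
`DG (0, λ) (u, v) = D∂ρF (0, λ) (u / 2, v)`. Away from `ρ = 0` the zeros of `F` are those of `G`.
Holomorphy in `λ` and the symmetry of second derivatives make `v ↦ D∂ρF (0, iτ₀) (0, v)` complex
linear, i.e. multiplication by `∂λ∂ρF (0, iτ₀) ≠ 0`, so the implicit function theorem applies to
`G` at `(0, iτ₀)`; it gives the branch, its local uniqueness, and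
`λ*'(0) = -∂ρG / ∂λG = -½ ∂ρ²F / ∂λ∂ρF`.
-/

open Complex Metric Topology

lemma exists_eventually_forall_norm_le {X Y F : Type*} [TopologicalSpace X] [TopologicalSpace Y]
    [NormedAddCommGroup F]
    {K : Set Y} (hK : IsCompact K) {g : X × Y → F} (hg : Continuous g) (x₀ : X) :
    ∃ C, ∀ᶠ x in 𝓝 x₀, ∀ y ∈ K, ‖g (x, y)‖ ≤ C := by
  obtain ⟨C, hC⟩ := hK.exists_bound_of_continuousOn (f := fun y => g (x₀, y)) (by fun_prop)
  refine ⟨C + 1, hK.eventually_forall_of_forall_eventually fun y hy => ?_⟩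
  filter_upwards [(hg.norm.continuousAt (x := (x₀, y))).eventually
    (gt_mem_nhds (show ‖g (x₀, y)‖ < C + 1 by linarith [hC y hy]))] with z hz
  exact hz.le

section Hadamard

variable {E F : Type*} [NormedAddCommGroup F] [NormedSpace ℝ F]

/-- For `h = ∂₁f` with `f (0, ·) = 0` this is `f x / x.1` (see `eq_smul_hadamardQuotient`). -/
noncomputable def hadamardQuotient (h : ℝ × E → F) (x : ℝ × E) : F :=
  ∫ t in (0 : ℝ)..1, h (t * x.1, x.2)

lemma hadamardQuotient_zero_fst [CompleteSpace F] (h : ℝ × E → F) (e : E) :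
    hadamardQuotient h (0, e) = h (0, e) := by
  simp [hadamardQuotient]

variable [NormedAddCommGroup E] [NormedSpace ℝ E]

noncomputable def dilateFst (t : ℝ) : ℝ × E →L[ℝ] ℝ × E :=
  t • (ContinuousLinearMap.inl ℝ ℝ E).comp (ContinuousLinearMap.fst ℝ ℝ E)
    + (ContinuousLinearMap.inr ℝ ℝ E).comp (ContinuousLinearMap.snd ℝ ℝ E)

@[simp]
lemma dilateFst_apply (t : ℝ) (x : ℝ × E) : dilateFst t x = (t * x.1, x.2) := by
  simp [dilateFst]

lemma continuous_dilateFst : Continuous (dilateFst (E := E)) :=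
  (continuous_id.smul continuous_const).add continuous_const

lemma hasFDerivAt_hadamardQuotient {h : ℝ × E → F} (hh : ContDiff ℝ 1 h) (p : ℝ × E) :
    HasFDerivAt (hadamardQuotient h)
      (∫ t in (0 : ℝ)..1, (fderiv ℝ h (t * p.1, p.2)).comp (dilateFst t)) p := by
  set Ψ : ℝ × E → ℝ → ℝ × E →L[ℝ] F := fun x t => (fderiv ℝ h (t * x.1, x.2)).comp (dilateFst t)
  have hΨ : Continuous fun q : (ℝ × E) × ℝ => Ψ q.1 q.2 :=
    ((hh.continuous_fderiv one_ne_zero).comp (by fun_prop)).clm_comp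
      (continuous_dilateFst.comp continuous_snd)
  obtain ⟨C, hC⟩ := exists_eventually_forall_norm_le isCompact_Icc hΨ p
  refine intervalIntegral.hasFDerivAt_integral_of_dominated_of_fderiv_le (F' := Ψ)
    (bound := fun _ => C) hC
    (Filter.Eventually.of_forall fun x => (by fun_prop : Continuous
      fun t : ℝ => h (t * x.1, x.2)).aestronglyMeasurable)
    ((by fun_prop : Continuous fun t : ℝ => h (t * p.1, p.2)).intervalIntegrable 0 1)
    (hΨ.comp (continuous_const.prodMk continuous_id)).aestronglyMeasurable ?_
    intervalIntegrable_const ?_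
  · refine Filter.Eventually.of_forall fun t ht x hx => hx t ?_
    rw [Set.uIoc_of_le zero_le_one] at ht
    exact Set.mem_Icc_of_Ioc ht
  · refine Filter.Eventually.of_forall fun t _ x _ => ?_
    have := ((hh.differentiable one_ne_zero (dilateFst t x)).hasFDerivAt).comp x
      (dilateFst (E := E) t).hasFDerivAt
    simpa [Function.comp_def] using this

lemma contDiff_hadamardQuotient {h : ℝ × E → F} (hh : ContDiff ℝ 1 h) :
    ContDiff ℝ 1 (hadamardQuotient h) := by
  rw [contDiff_one_iff_fderiv]
  refine ⟨fun p => (hasFDerivAt_hadamardQuotient hh p).differentiableAt, ?_⟩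
  rw [funext fun p => (hasFDerivAt_hadamardQuotient hh p).fderiv]
  refine intervalIntegral.continuous_parametric_intervalIntegral_of_continuous
    ?_ continuous_const
  exact ((hh.continuous_fderiv one_ne_zero).comp (by fun_prop)).clm_comp
    (continuous_dilateFst.comp continuous_snd)

variable [CompleteSpace F]

lemma fderiv_hadamardQuotient_zero_fst {h : ℝ × E → F} (hh : ContDiff ℝ 1 h) (e : E) :
    fderiv ℝ (hadamardQuotient h) (0, e) = (fderiv ℝ h (0, e)).comp (dilateFst 2⁻¹) := by
  rw [(hasFDerivAt_hadamardQuotient hh (0, e)).fderiv]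
  simp only [mul_zero]
  set A := fderiv ℝ h (0, e)
  refine ContinuousLinearMap.ext fun ⟨u, v⟩ => ?_
  have hsplit : ∀ t : ℝ, A (dilateFst t (u, v)) = t • A (u, 0) + A (0, v) := fun t => by
    rw [← A.map_smul, ← map_add]; simp
  rw [ContinuousLinearMap.intervalIntegral_apply
    ((continuous_const.clm_comp continuous_dilateFst).intervalIntegrable 0 1)]
  simp only [ContinuousLinearMap.comp_apply, hsplit]
  rw [intervalIntegral.integral_add
    ((by fun_prop : Continuous fun t : ℝ => t • A (u, 0)).intervalIntegrable
      0 1) intervalIntegrable_const,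
    intervalIntegral.integral_smul_const]
  norm_num [integral_id]

lemma eq_smul_hadamardQuotient {f : ℝ × E → F} (hf : ContDiff ℝ 1 f) (hf0 : ∀ e, f (0, e) = 0)
    (x : ℝ × E) : f x = x.1 • hadamardQuotient (fun p => fderiv ℝ f p (1, 0)) x := by
  have hderiv : ∀ t ∈ Set.uIcc (0 : ℝ) 1, HasDerivAt (fun s => f (s * x.1, x.2))
      (x.1 • fderiv ℝ f (t * x.1, x.2) (1, 0)) t := fun t _ => by
    have hγ : HasDerivAt (fun s : ℝ => (s * x.1, x.2)) (x.1, (0 : E)) t :=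
      (hasDerivAt_mul_const x.1).prodMk (hasDerivAt_const t x.2)
    refine ((hf.differentiable one_ne_zero _).hasFDerivAt.comp_hasDerivAt t hγ).congr_deriv ?_
    rw [← map_smul]; simp
  have hcont : Continuous fun t : ℝ => x.1 • fderiv ℝ f (t * x.1, x.2) (1, 0) :=
    (((hf.continuous_fderiv one_ne_zero).clm_apply continuous_const).comp
      (by fun_prop)).const_smul x.1
  have := intervalIntegral.integral_eq_sub_of_hasDerivAt hderiv (hcont.intervalIntegrable 0 1)
  rw [intervalIntegral.integral_smul] at this
  simpa [hf0, hadamardQuotient] using this.symm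

end Hadamard

section PartiallyHolomorphic

variable {E : Type*} [NormedAddCommGroup E] [NormedSpace ℝ E] {f : E × ℂ → ℂ}

lemma fderiv_apply_zero_eq_mul {p : E × ℂ} (hf : DifferentiableAt ℝ f p)
    (hol : DifferentiableAt ℂ (fun z => f (p.1, z)) p.2) (v : ℂ) :
    fderiv ℝ f p (0, v) = v * fderiv ℝ f p (0, 1) := by
  have hinr : HasFDerivAt (fun z => f (p.1, z)) ((fderiv ℝ f p).comp (.inr ℝ E ℂ)) p.2 :=
    hf.hasFDerivAt.comp p.2 (hasFDerivAt_prodMk_right p.1 p.2)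
  have hC : ∀ w, fderiv ℝ f p (0, w) = fderiv ℂ (fun z => f (p.1, z)) p.2 w := fun w =>
    congrArg (· w) (hinr.unique (hol.hasFDerivAt.restrictScalars ℝ))
  rw [hC, hC, ← smul_eq_mul, ← map_smul, smul_eq_mul, mul_one]

lemma fderiv_fderiv_apply_zero_eq_mul (hf : ContDiff ℝ 2 f)
    (hol : ∀ x z, DifferentiableAt ℂ (fun z => f (x, z)) z) (p : E × ℂ) (w : E) (v : ℂ) :
    fderiv ℝ (fun q => fderiv ℝ f q (w, 0)) p (0, v)
      = v * fderiv ℝ (fun q => fderiv ℝ f q (w, 0)) p (0, 1) := by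
  have hf' : ContDiff ℝ 1 (fderiv ℝ f) := hf.fderiv_right (by norm_num)
  have happly : ∀ a b, fderiv ℝ (fun q => fderiv ℝ f q a) p b = fderiv ℝ (fderiv ℝ f) p b a :=
    fun a b => by
      rw [fderiv_clm_apply (hf'.differentiable one_ne_zero p) (differentiableAt_const a)]
      simp
  have hsymm : IsSymmSndFDerivAt ℝ f p := hf.contDiffAt.isSymmSndFDerivAt (by simp)
  have hlin : (fun q => fderiv ℝ f q (0, v)) = fun q => v * fderiv ℝ f q (0, 1) :=
    funext fun q => fderiv_apply_zero_eq_mul (hf.differentiable (by norm_num) q) (hol _ _) v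
  -- swapping the two differentiations puts `v` into the complex-linear inner derivative
  calc fderiv ℝ (fun q => fderiv ℝ f q (w, 0)) p (0, v)
      = fderiv ℝ (fun q => fderiv ℝ f q (0, v)) p (w, 0) := by rw [happly, happly, hsymm]
    _ = v * fderiv ℝ (fun q => fderiv ℝ f q (0, 1)) p (w, 0) := by
        rw [hlin, fderiv_const_mul ((hf'.clm_apply contDiff_const).differentiable one_ne_zero p)]
        rfl
    _ = v * fderiv ℝ (fun q => fderiv ℝ f q (w, 0)) p (0, 1) := by rw [happly, happly, hsymm]

end PartiallyHolomorphic

lemma exists_implicit_branch {G : ℝ × ℂ → ℂ} {x₀ : ℝ} {z₀ : ℂ} (hG : ContDiffAt ℝ 1 G (x₀, z₀))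
    (hG₀ : G (x₀, z₀) = 0) {a : ℂ} (ha : a ≠ 0)
    (hGz : ∀ v, fderiv ℝ G (x₀, z₀) (0, v) = v * a) :
    ∃ ρ₀ > 0, ∃ ψ : ℝ → ℂ, ContDiffOn ℝ 1 ψ (ball x₀ ρ₀) ∧ ψ x₀ = z₀ ∧
      (∀ x ∈ ball x₀ ρ₀, G (x, ψ x) = 0) ∧
      deriv ψ x₀ = -fderiv ℝ G (x₀, z₀) (1, 0) / a ∧
      ∀ᶠ p in 𝓝 (x₀, z₀), G p = 0 → p.2 = ψ p.1 := by
  set L := fderiv ℝ G (x₀, z₀) ∘L .inr ℝ ℝ ℂ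
  have hL : L = (ContinuousLinearEquiv.smulLeft (R₁ := ℝ) (M₁ := ℂ) (Units.mk0 a ha) :
      ℂ →L[ℝ] ℂ) := by
    ext1 v; simp [L, hGz, mul_comm]
  have hinv : L.IsInvertible := hL ▸ ContinuousLinearMap.isInvertible_equiv
  have hL_inv : ∀ y, L.inverse y = y / a := fun y =>
    hinv.inverse_apply_eq.2 (by simp [L, hGz, ha])
  set ψ := hG.implicitFunction one_ne_zero hinv
  obtain ⟨ρ₀, hρ₀, hψ⟩ := eventually_nhds_iff_ball.1
    (((hG.contDiffAt_implicitFunction one_ne_zero hinv).eventually (by simp)).and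
      (hG.eventually_apply_implicitFunction one_ne_zero hinv))
  refine ⟨ρ₀, hρ₀, ψ, fun x hx => (hψ x hx).1.contDiffWithinAt,
    hG.implicitFunction_apply_self one_ne_zero hinv, fun x hx => (hψ x hx).2.trans hG₀, ?_, ?_⟩
  · rw [(hG.hasStrictFDerivAt_implicitFunction one_ne_zero hinv).hasFDerivAt.hasDerivAt.deriv]
    simpa [neg_div] using hL_inv _
  · filter_upwards [hG.eventually_apply_eq_iff_implicitFunction one_ne_zero hinv] with p hp hGp
    exact (hp.1 (hGp.trans hG₀.symm)).symm

theorem stmt_1_general (F : ℝ × ℂ → ℂ)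
    (hF : ContDiff ℝ 3 F)
    (hol : ∀ (ρ : ℝ) (lam : ℂ), DifferentiableAt ℂ (fun z => F (ρ, z)) lam)
    (hF0 : ∀ lam : ℂ, F (0, lam) = 0)
    (τ₀ : ℝ) :
    let dρF : ℝ × ℂ → ℂ := fun p => fderiv ℝ F p (1, 0)
    -- ∂ρF(0, iτ₀) = 0 and ∂λ∂ρF(0, iτ₀) ≠ 0 imply:
    dρF (0, I * τ₀) = 0 →
    fderiv ℝ dρF (0, I * τ₀) ((0 : ℝ), (1 : ℂ)) ≠ 0 →
    ∃ ρ₀ > (0:ℝ), ∃ lamstar : ℝ → ℂ,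
      ContDiffOn ℝ 1 lamstar (Set.Ioo (-ρ₀) ρ₀) ∧
      lamstar 0 = I * τ₀ ∧
      (∀ ρ : ℝ, |ρ| < ρ₀ → F (ρ, lamstar ρ) = 0) ∧
      deriv lamstar 0 =
        -(1/2) * fderiv ℝ dρF (0, I * τ₀) ((1 : ℝ), (0 : ℂ)) /
          fderiv ℝ dρF (0, I * τ₀) ((0 : ℝ), (1 : ℂ)) ∧
      ∃ δ > (0:ℝ), ∀ (ρ : ℝ) (μ : ℂ), 0 < |ρ| → |ρ| < δ → ‖μ - I * τ₀‖ < δ →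
        F (ρ, μ) = 0 → μ = lamstar ρ := by
  intro dρF hdρF₀ ha
  have hF2 : ContDiff ℝ 2 F := hF.of_le (by norm_num)
  have hdρF : ContDiff ℝ 1 dρF := (hF.fderiv_right (by norm_num)).clm_apply contDiff_const
  have hFG : ∀ p, F p = p.1 • hadamardQuotient dρF p :=
    eq_smul_hadamardQuotient (hF2.of_le one_le_two) hF0
  have hG' := fderiv_hadamardQuotient_zero_fst hdρF (I * τ₀)
  obtain ⟨ρ₀, hρ₀, ψ, hψC, hψ₀, hψG, hψ', hψ_uniq⟩ := exists_implicit_branch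
    (contDiff_hadamardQuotient hdρF).contDiffAt
    ((hadamardQuotient_zero_fst dρF _).trans hdρF₀) ha
    fun v => by simpa [hG'] using fderiv_fderiv_apply_zero_eq_mul hF2 hol (0, I * τ₀) 1 v
  obtain ⟨δ, hδ, hδψ⟩ := Metric.eventually_nhds_iff.1 hψ_uniq
  refine ⟨ρ₀, hρ₀, ψ, by simpa [Real.ball_eq_Ioo] using hψC, hψ₀,
    fun ρ hρ => by rw [hFG, hψG ρ (by simpa using hρ), smul_zero], ?_, δ, hδ, ?_⟩
  · have hhalf : dilateFst 2⁻¹ ((1 : ℝ), (0 : ℂ)) = (2⁻¹ : ℝ) • ((1 : ℝ), (0 : ℂ)) := by simp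
    rw [hψ', hG', ContinuousLinearMap.comp_apply, hhalf, map_smul, real_smul]
    push_cast
    ring
  · intro ρ μ hρ hρδ hμδ hFμ
    refine hδψ ?_ ((smul_eq_zero.1 ((hFG _).symm.trans hFμ)).resolve_left (abs_pos.1 hρ))
    simpa [Prod.dist_eq, dist_eq_norm] using ⟨hρδ, hμδ⟩

/-- Analytic core of Lemma 1.8: existence, derivative formula, and local uniqueness of the
root branch `λ*(ρ)` of `F (ρ, λ) = 0` bifurcating from a simple imaginary root `iτ₀` of
`∂ρF (0, ·)`. -/
theorem stmt_1 (F : ℝ × ℂ → ℂ)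
    (hF : ContDiff ℝ 3 F)
    (hol : ∀ (ρ : ℝ) (lam : ℂ), DifferentiableAt ℂ (fun z => F (ρ, z)) lam)
    (hF0 : ∀ lam : ℂ, F (0, lam) = 0)
    (τ₀ : ℝ) (hτ₀ : τ₀ ≠ 0) :
    let dρF : ℝ × ℂ → ℂ := fun p => fderiv ℝ F p (1, 0)
    -- ∂ρF(0, iτ₀) = 0 and ∂λ∂ρF(0, iτ₀) ≠ 0 imply:
    dρF (0, I * τ₀) = 0 →
    fderiv ℝ dρF (0, I * τ₀) ((0 : ℝ), (1 : ℂ)) ≠ 0 →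
    ∃ ρ₀ > (0:ℝ), ∃ lamstar : ℝ → ℂ,
      ContDiffOn ℝ 1 lamstar (Set.Ioo (-ρ₀) ρ₀) ∧
      lamstar 0 = I * τ₀ ∧
      (∀ ρ : ℝ, |ρ| < ρ₀ → F (ρ, lamstar ρ) = 0) ∧
      deriv lamstar 0 =
        -(1/2) * fderiv ℝ dρF (0, I * τ₀) ((1 : ℝ), (0 : ℂ)) /
          fderiv ℝ dρF (0, I * τ₀) ((0 : ℝ), (1 : ℂ)) ∧
      ∃ δ > (0:ℝ), ∀ (ρ : ℝ) (μ : ℂ), 0 < |ρ| → |ρ| < δ → ‖μ - I * τ₀‖ < δ →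
        F (ρ, μ) = 0 → μ = lamstar ρ :=
  stmt_1_general F hF hol hF0 τ₀
end

section
/- Let τ* : ℝ → ℝ, β, δ : ℝ → ℂ be continuously differentiable, let r : ℝ × ℝ → ℂ be continuously differentiable, and for ε, ξ ∈ ℝ set λ(ε, ξ) := i ξ τ*(ε) − ξ² β(ε) + δ(ε) ξ³ + r(ε, ξ) ξ⁴. Assume Re β(0) = 0 and (d/dε)(Re β)(0) < 0. Then there exist ξ₀ > 0 and a unique continuously differentiable function E : (−ξ₀, ξ₀) → ℝ with E(0) = 0 such that Re λ(E(ξ), ξ) = 0 for all |ξ| < ξ₀. Moreover there is δ₀ > 0 such that whenever 0 < |ξ| < δ₀, |ε| < δ₀ and Re λ(ε, ξ) = 0, one has ε = E(ξ). -/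
/-!
Since `I ξ τ*(ε)` is purely imaginary, `Re λ(ε, ξ) = ξ² F(ξ, ε)` with
`F(ξ, ε) = -Re β(ε) + Re δ(ε) ξ + Re r(ε, ξ) ξ²`, a `C¹` function with `F(0, ε) = -Re β(ε)`.
Assumption (B2) says exactly that `F(0, 0) = 0` and `∂_ε F(0, 0) > 0`, so the implicit function
theorem gives a `C¹` branch `ε = E(ξ)` of zeros of `F` which are the only zeros in a box around the
origin; for `ξ ≠ 0` these are the zeros of `Re λ`. A second `C¹` solution `E'` with `E'(0) = 0`
agrees with `E` on the set where it stays in the box; that set is open and, by continuity, closed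
in the interval, hence everything.
-/
open Set Metric Topology

theorem IsPreconnected.eqOn_of_mem_imp_eq {X Y : Type*} [TopologicalSpace X] [TopologicalSpace Y]
    [T2Space Y] {s : Set X} (hs : IsPreconnected s) (hso : IsOpen s) {f g : X → Y}
    (hf : ContinuousOn f s) (hg : ContinuousOn g s) {U : Set Y} (hU : IsOpen U)
    (hgU : MapsTo g s U) (huniq : ∀ x ∈ s, f x ∈ U → f x = g x) {a : X} (ha : a ∈ s)
    (hfa : f a = g a) : EqOn f g s := by
  set t := s ∩ f ⁻¹' U
  have hft : EqOn f g t := fun x hx => huniq x hx.1 hx.2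
  suffices hst : s ⊆ t from hft.mono hst
  refine hs.subset_of_closure_inter_subset (hf.isOpen_inter_preimage hso hU)
    ⟨a, ha, ha, show f a ∈ U by rw [hfa]; exact hgU ha⟩ fun x hx => ⟨hx.2, ?_⟩
  have hfg : EqOn f g (closure t ∩ s) :=
    hft.of_subset_closure (hf.mono inter_subset_right) (hg.mono inter_subset_right)
      (fun y hy => ⟨subset_closure hy, hy.1⟩) inter_subset_left
  show f x ∈ U
  rw [hfg hx]
  exact hgU hx.2

theorem ContinuousLinearMap.isInvertible_of_apply_one_ne_zero {𝕜 : Type*} [Field 𝕜]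
    [TopologicalSpace 𝕜] [IsTopologicalRing 𝕜] {f : 𝕜 →L[𝕜] 𝕜} (hf : f 1 ≠ 0) :
    f.IsInvertible :=
  .of_inverse (g := (f 1)⁻¹ • .id 𝕜 𝕜) (ext_ring <| by simp [inv_mul_cancel₀ hf])
    (ext_ring <| by simp [inv_mul_cancel₀ hf])

theorem isInvertible_fderiv_comp_inr {𝕜 E : Type*} [NontriviallyNormedField 𝕜]
    [NormedAddCommGroup E] [NormedSpace 𝕜 E] {f : E × 𝕜 → 𝕜} {u : E × 𝕜}
    (hf : DifferentiableAt 𝕜 f u) (h : deriv (fun y => f (u.1, y)) u.2 ≠ 0) :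
    (fderiv 𝕜 f u ∘L .inr 𝕜 E 𝕜).IsInvertible := by
  refine ContinuousLinearMap.isInvertible_of_apply_one_ne_zero ?_
  have hslice : HasFDerivAt (fun y => f (u.1, y)) (fderiv 𝕜 f u ∘L .inr 𝕜 E 𝕜) u.2 :=
    hf.hasFDerivAt.comp u.2 (hasFDerivAt_prodMk_right u.1 u.2)
  rwa [← hslice.hasDerivAt.deriv]

section ImplicitFunction

variable {𝕜 : Type*} [RCLike 𝕜]
  {E₁ : Type*} [NormedAddCommGroup E₁] [NormedSpace 𝕜 E₁] [CompleteSpace E₁]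
  {E₂ : Type*} [NormedAddCommGroup E₂] [NormedSpace 𝕜 E₂] [CompleteSpace E₂]
  {F : Type*} [NormedAddCommGroup F] [NormedSpace 𝕜 F] [CompleteSpace F]

theorem ContDiffAt.exists_implicitFunction_on_ball {n : ℕ} {f : E₁ × E₂ → F} {u : E₁ × E₂}
    (cdf : ContDiffAt 𝕜 n f u) (pn : n ≠ 0)
    (if₂ : (fderiv 𝕜 f u ∘L .inr 𝕜 E₁ E₂).IsInvertible) :
    ∃ ψ : E₁ → E₂, ψ u.1 = u.2 ∧ ∃ ρ > 0, ∃ σ > 0, ρ ≤ σ ∧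
      ContDiffOn 𝕜 n ψ (ball u.1 ρ) ∧ MapsTo ψ (ball u.1 ρ) (ball u.2 σ) ∧
      (∀ x ∈ ball u.1 ρ, f (x, ψ x) = f u) ∧
      ∀ x ∈ ball u.1 σ, ∀ y ∈ ball u.2 σ, f (x, y) = f u → y = ψ x := by
  set ψ := cdf.implicitFunction (pn := by exact_mod_cast pn) if₂
  have hψu : ψ u.1 = u.2 := cdf.implicitFunction_apply_self _ if₂
  have hψ : ContDiffAt 𝕜 n ψ u.1 := cdf.contDiffAt_implicitFunction _ if₂
  obtain ⟨σ, hσ, hσuniq⟩ := Metric.eventually_nhds_iff.mp <|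
    cdf.eventually_apply_eq_iff_implicitFunction (by exact_mod_cast pn) if₂
  obtain ⟨s, hs, hψs⟩ := hψ.contDiffOn le_rfl (by simp)
  have hmaps : ∀ᶠ x in 𝓝 u.1, ψ x ∈ ball u.2 σ :=
    hψ.continuousAt.preimage_mem_nhds (hψu ▸ ball_mem_nhds (ψ u.1) hσ)
  have hsol := cdf.eventually_apply_implicitFunction (by exact_mod_cast pn) if₂
  obtain ⟨ρ, hρ, hρgood⟩ :=
    Metric.eventually_nhds_iff.mp <| (show ∀ᶠ x in 𝓝 u.1, x ∈ s from hs).and (hmaps.and hsol)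
  refine ⟨ψ, hψu, min ρ σ, lt_min hρ hσ, σ, hσ, min_le_right _ _, ?_, ?_, ?_, ?_⟩
  · exact hψs.mono fun x hx => (hρgood (lt_of_lt_of_le hx (min_le_left _ _))).1
  · exact fun x hx => (hρgood (lt_of_lt_of_le hx (min_le_left _ _))).2.1
  · exact fun x hx => (hρgood (lt_of_lt_of_le hx (min_le_left _ _))).2.2
  · intro x hx y hy hxy
    have hxy_mem : (x, y) ∈ ball u σ := by rw [← ball_prod_same]; exact ⟨hx, hy⟩
    exact ((hσuniq hxy_mem).mp hxy).symm

end ImplicitFunction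

-- The transverse frequency ξ comes first so that the parameter ε is the implicit variable.
def reducedRe (β δ : ℝ → ℂ) (r : ℝ × ℝ → ℂ) (p : ℝ × ℝ) : ℝ :=
  -(β p.2).re + (δ p.2).re * p.1 + (r (p.2, p.1)).re * p.1 ^ 2

theorem re_eq_sq_mul_reducedRe (τs : ℝ → ℝ) (β δ : ℝ → ℂ) (r : ℝ × ℝ → ℂ) (ε ξ : ℝ) :
    (Complex.I * (ξ : ℂ) * (τs ε : ℂ) - (ξ : ℂ) ^ 2 * β ε + δ ε * (ξ : ℂ) ^ 3
      + r (ε, ξ) * (ξ : ℂ) ^ 4).re = ξ ^ 2 * reducedRe β δ r (ξ, ε) := by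
  simp only [reducedRe, Complex.add_re, Complex.sub_re, Complex.mul_re, Complex.I_re,
    Complex.I_im, Complex.ofReal_re, Complex.ofReal_im, ← Complex.ofReal_pow]
  ring

theorem contDiff_reducedRe {β δ : ℝ → ℂ} {r : ℝ × ℝ → ℂ} (hβ : ContDiff ℝ 1 β)
    (hδ : ContDiff ℝ 1 δ) (hr : ContDiff ℝ 1 r) : ContDiff ℝ 1 (reducedRe β δ r) := by
  have hre {g : ℝ × ℝ → ℂ} (hg : ContDiff ℝ 1 g) : ContDiff ℝ 1 fun p => (g p).re :=
    Complex.reCLM.contDiff.comp hg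
  exact ((hre (hβ.comp contDiff_snd)).neg.add ((hre (hδ.comp contDiff_snd)).mul contDiff_fst)).add
    ((hre (hr.comp (contDiff_snd.prodMk contDiff_fst))).mul (contDiff_fst.pow 2))

theorem reducedRe_zero_left (β δ : ℝ → ℂ) (r : ℝ × ℝ → ℂ) (ε : ℝ) :
    reducedRe β δ r (0, ε) = -(β ε).re := by
  simp [reducedRe]

theorem stmt_2_general (τs : ℝ → ℝ) (β δ : ℝ → ℂ) (r : ℝ × ℝ → ℂ)
    (hβ : ContDiff ℝ 1 β) (hδ : ContDiff ℝ 1 δ)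
    (hr : ContDiff ℝ 1 r)
    (lam : ℝ → ℝ → ℂ)
    (hlam : lam = fun (ε ξ : ℝ) =>
      Complex.I * (ξ : ℂ) * (τs ε : ℂ) - (ξ : ℂ)^2 * β ε + δ ε * (ξ : ℂ)^3
        + r (ε, ξ) * (ξ : ℂ)^4)
    (hβ0 : (β 0).re = 0)
    (hβ' : deriv (fun ε => (β ε).re) 0 < 0) :
    ∃ ξ₀ > (0:ℝ), ∃ E : ℝ → ℝ,
      (ContDiffOn ℝ 1 E (Set.Ioo (-ξ₀) ξ₀) ∧ E 0 = 0 ∧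
        ∀ ξ : ℝ, |ξ| < ξ₀ → (lam (E ξ) ξ).re = 0) ∧
      (∀ E' : ℝ → ℝ,
        ContDiffOn ℝ 1 E' (Set.Ioo (-ξ₀) ξ₀) → E' 0 = 0 →
        (∀ ξ : ℝ, |ξ| < ξ₀ → (lam (E' ξ) ξ).re = 0) →
        ∀ ξ : ℝ, |ξ| < ξ₀ → E' ξ = E ξ) ∧
      ∃ δ₀ > (0:ℝ), ∀ ξ ε : ℝ, 0 < |ξ| → |ξ| < δ₀ → |ε| < δ₀ →
        (lam ε ξ).re = 0 → ε = E ξ := by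
  have hF := contDiff_reducedRe hβ hδ hr
  have hF₂ : deriv (fun ε => reducedRe β δ r (0, ε)) 0 ≠ 0 := by
    simp only [reducedRe_zero_left, deriv.fun_neg]
    linarith
  obtain ⟨E, hE0, ξ₀, hξ₀, δ₀, hδ₀, hξ₀δ₀, hEcd, hEmaps, hEsol, hEuniq⟩ :=
    hF.contDiffAt.exists_implicitFunction_on_ball one_ne_zero
      (isInvertible_fderiv_comp_inr (hF.differentiable one_ne_zero (0, 0)) hF₂)
  have hF00 : reducedRe β δ r (0, 0) = 0 := by rw [reducedRe_zero_left, hβ0, neg_zero]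
  dsimp only at hE0 hEcd hEmaps hEsol hEuniq
  rw [hF00] at hEsol hEuniq
  have hball (ρ : ℝ) : ball (0 : ℝ) ρ = Ioo (-ρ) ρ := by simp [Real.ball_eq_Ioo]
  rw [hball] at hEcd hEmaps hEsol
  have hre (ε ξ : ℝ) : (lam ε ξ).re = ξ ^ 2 * reducedRe β δ r (ξ, ε) := by
    rw [hlam]
    exact re_eq_sq_mul_reducedRe τs β δ r ε ξ
  have hpt (ξ ε : ℝ) (hξ : 0 < |ξ|) (hξδ : |ξ| < δ₀) (hεδ : |ε| < δ₀) (h : (lam ε ξ).re = 0) :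
      ε = E ξ := by
    rw [hre, mul_eq_zero, or_iff_right (pow_ne_zero 2 (abs_pos.mp hξ))] at h
    exact hEuniq ξ (by simpa using hξδ) ε (by simpa using hεδ) h
  refine ⟨ξ₀, hξ₀, E, ⟨hEcd, hE0, fun ξ hξ => ?_⟩, ?_, δ₀, hδ₀, hpt⟩
  · rw [hre, hEsol ξ (abs_lt.mp hξ), mul_zero]
  intro E' hE'cd hE'0 hE'sol ξ hξ
  refine isPreconnected_Ioo.eqOn_of_mem_imp_eq isOpen_Ioo hE'cd.continuousOn
    hEcd.continuousOn isOpen_ball hEmaps (fun x hx hx' => ?_)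
    (a := 0) (by simpa using hξ₀) (by rw [hE'0, hE0]) (abs_lt.mp hξ)
  rcases eq_or_ne x 0 with rfl | hx0
  · rw [hE'0, hE0]
  · have hx : |x| < ξ₀ := abs_lt.mpr hx
    exact hpt x (E' x) (abs_pos.mpr hx0) (hx.trans_le hξ₀δ₀) (by simpa using hx') (hE'sol x hx)

/-- Corollary 1.9 (existence and uniqueness part): under (B2), i.e. `Re β(0) = 0` and
`∂ε Re β(0) < 0`, the equation `Re λ(ε, ξ) = 0` with
`λ(ε, ξ) = iξτ*(ε) − ξ²β(ε) + δ(ε)ξ³ + r(ε, ξ)ξ⁴` is solved near the origin by a unique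
`C¹` function `ε = E(ξ)` with `E(0) = 0`, and this solution is pointwise unique for
`0 < |ξ|, |ε|` small. -/
theorem stmt_2 (τs : ℝ → ℝ) (β δ : ℝ → ℂ) (r : ℝ × ℝ → ℂ)
    (hτ : ContDiff ℝ 1 τs) (hβ : ContDiff ℝ 1 β) (hδ : ContDiff ℝ 1 δ)
    (hr : ContDiff ℝ 1 r)
    (lam : ℝ → ℝ → ℂ)
    (hlam : lam = fun (ε ξ : ℝ) =>
      Complex.I * (ξ : ℂ) * (τs ε : ℂ) - (ξ : ℂ)^2 * β ε + δ ε * (ξ : ℂ)^3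
        + r (ε, ξ) * (ξ : ℂ)^4)
    (hβ0 : (β 0).re = 0)
    (hβ' : deriv (fun ε => (β ε).re) 0 < 0) :
    ∃ ξ₀ > (0:ℝ), ∃ E : ℝ → ℝ,
      (ContDiffOn ℝ 1 E (Set.Ioo (-ξ₀) ξ₀) ∧ E 0 = 0 ∧
        ∀ ξ : ℝ, |ξ| < ξ₀ → (lam (E ξ) ξ).re = 0) ∧
      (∀ E' : ℝ → ℝ,
        ContDiffOn ℝ 1 E' (Set.Ioo (-ξ₀) ξ₀) → E' 0 = 0 →
        (∀ ξ : ℝ, |ξ| < ξ₀ → (lam (E' ξ) ξ).re = 0) →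
        ∀ ξ : ℝ, |ξ| < ξ₀ → E' ξ = E ξ) ∧
      ∃ δ₀ > (0:ℝ), ∀ ξ ε : ℝ, 0 < |ξ| → |ξ| < δ₀ → |ε| < δ₀ →
        (lam ε ξ).re = 0 → ε = E ξ :=
  stmt_2_general τs β δ r hβ hδ hr lam hlam hβ0 hβ'
end

section
/- Let τ* : ℝ → ℝ, β, δ : ℝ → ℂ be continuously differentiable, let r : ℝ × ℝ → ℂ be continuously differentiable, and for ε, ξ ∈ ℝ set λ(ε, ξ) := i ξ τ*(ε) − ξ² β(ε) + δ(ε) ξ³ + r(ε, ξ) ξ⁴. Assume Re β(0) = 0, (d/dε)(Re β)(0) < 0, and in addition Re δ(0) ≠ 0. Let E be the continuously differentiable function with E(0) = 0 and Re λ(E(ξ), ξ) = 0 for ξ near 0. Then E(ξ)/ξ → Re δ(0) / (d/dε)(Re β)(0) as ξ → 0; in particular E(ξ) ≠ 0 for all sufficiently small ξ ≠ 0. -/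
/-!
Since `Re (i ξ τ*(ε)) = 0`, the root condition reads
`ξ² (ξ (Re δ(ε) + ξ Re r(ε, ξ)) - Re β(ε)) = 0`, so along the curve
`Re β(E ξ) = ξ F(ξ)` with `F(ξ) → Re δ(0)`. Writing `Re β(ε) = ε · s(ε)` with `s` the
difference quotient of `Re β` at `0`, which tends to `∂ε Re β(0) ≠ 0`, gives
`E(ξ)/ξ = F(ξ)/s(E ξ) → Re δ(0)/∂ε Re β(0)`, a nonzero limit.
-/

open Filter Topology

lemma re_expansion_eq (ξ τ : ℝ) (b d q : ℂ) :
    (Complex.I * ξ * τ - (ξ : ℂ) ^ 2 * b + d * (ξ : ℂ) ^ 3 + q * (ξ : ℂ) ^ 4).re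
      = ξ ^ 2 * (ξ * (d.re + ξ * q.re) - b.re) := by
  simp only [Complex.add_re, Complex.sub_re, Complex.mul_re, Complex.mul_im,
    Complex.I_re, Complex.I_im, ← Complex.ofReal_pow, Complex.ofReal_re, Complex.ofReal_im]
  ring

lemma tendsto_div_of_comp_eq_mul {α : Type*} {l : Filter α} {g : ℝ → ℝ} {E u F : α → ℝ}
    {c : ℝ} (hg0 : g 0 = 0) (hg' : deriv g 0 ≠ 0) (hE : Tendsto E l (𝓝 0))
    (hF : Tendsto F l (𝓝 c)) (hu : ∀ᶠ x in l, u x ≠ 0)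
    (hgEF : ∀ᶠ x in l, g (E x) = u x * F x) :
    Tendsto (fun x => E x / u x) l (𝓝 (c / deriv g 0)) := by
  have hslope : Tendsto (fun x => dslope g 0 (E x)) l (𝓝 (deriv g 0)) := by
    rw [← dslope_same]
    exact ((continuousAt_dslope_same.2 (differentiableAt_of_deriv_ne_zero hg')).tendsto).comp hE
  refine (hF.div hslope hg').congr' ?_
  filter_upwards [hslope.eventually_ne hg', hu, hgEF] with x hs hux hx
  have hfactor : E x * dslope g 0 (E x) = u x * F x := by
    simpa [hg0, hx] using sub_smul_dslope g 0 (E x)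
  rw [Pi.div_apply, div_eq_div_iff hs hux]
  linarith

lemma exists_pos_forall_ne_zero_of_tendsto_div {E : ℝ → ℝ} {L : ℝ} (hL : L ≠ 0)
    (hE : Tendsto (fun ξ => E ξ / ξ) (𝓝[≠] 0) (𝓝 L)) :
    ∃ ξ₁ > (0 : ℝ), ∀ ξ : ℝ, ξ ≠ 0 → |ξ| < ξ₁ → E ξ ≠ 0 := by
  obtain ⟨ξ₁, hξ₁, hne⟩ :=
    Metric.eventually_nhds_iff.1 (eventually_nhdsWithin_iff.1 (hE.eventually_ne hL))
  refine ⟨ξ₁, hξ₁, fun ξ hξ hlt hEξ => ?_⟩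
  exact hne (by rwa [Real.dist_0_eq_abs]) hξ (by simp [hEξ])

theorem stmt_3_general (τs : ℝ → ℝ) (β δ : ℝ → ℂ) (r : ℝ × ℝ → ℂ)
    (hδ : ContDiff ℝ 1 δ)
    (hr : ContDiff ℝ 1 r)
    (lam : ℝ → ℝ → ℂ)
    (hlam : lam = fun (ε ξ : ℝ) =>
      Complex.I * (ξ : ℂ) * (τs ε : ℂ) - (ξ : ℂ)^2 * β ε + δ ε * (ξ : ℂ)^3
        + r (ε, ξ) * (ξ : ℂ)^4)
    (hβ0 : (β 0).re = 0)
    (hβ' : deriv (fun ε => (β ε).re) 0 < 0)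
    (hδ0 : (δ 0).re ≠ 0)
    (ξ₀ : ℝ) (hξ₀ : 0 < ξ₀) (E : ℝ → ℝ)
    (hE : ContDiffOn ℝ 1 E (Set.Ioo (-ξ₀) ξ₀)) (hE0 : E 0 = 0)
    (hEroot : ∀ ξ : ℝ, |ξ| < ξ₀ → (lam (E ξ) ξ).re = 0) :
    Filter.Tendsto (fun ξ : ℝ => E ξ / ξ) (nhdsWithin 0 {(0:ℝ)}ᶜ)
      (nhds ((δ 0).re / deriv (fun ε => (β ε).re) 0)) ∧
    ∃ ξ₁ > (0:ℝ), ∀ ξ : ℝ, ξ ≠ 0 → |ξ| < ξ₁ → E ξ ≠ 0 := by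
  have hEc : ContinuousAt E 0 := hE.continuousOn.continuousAt (Ioo_mem_nhds (by linarith) hξ₀)
  have hEt : Tendsto E (𝓝[≠] 0) (𝓝 0) := by
    simpa [hE0] using hEc.tendsto.mono_left nhdsWithin_le_nhds
  set F : ℝ → ℝ := fun ξ => (δ (E ξ)).re + ξ * (r (E ξ, ξ)).re
  have hF : Tendsto F (𝓝[≠] 0) (𝓝 (δ 0).re) := by
    have hFc : ContinuousAt F 0 := by
      have := hδ.continuous; have := hr.continuous; fun_prop
    simpa [F, hE0] using hFc.tendsto.mono_left nhdsWithin_le_nhds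
  have hcurve : ∀ᶠ ξ in 𝓝[≠] 0, (β (E ξ)).re = ξ * F ξ := by
    filter_upwards [self_mem_nhdsWithin,
      nhdsWithin_le_nhds (Metric.ball_mem_nhds 0 hξ₀)] with ξ hξ hball
    have hroot := hEroot ξ (by simpa using hball)
    rw [hlam, re_expansion_eq] at hroot
    have := (mul_eq_zero.1 hroot).resolve_left (pow_ne_zero 2 hξ)
    linarith
  have hlim := tendsto_div_of_comp_eq_mul hβ0 hβ'.ne hEt hF self_mem_nhdsWithin hcurve
  exact ⟨hlim, exists_pos_forall_ne_zero_of_tendsto_div (div_ne_zero hδ0 hβ'.ne) hlim⟩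

/-- Asymptotic statement (1.24) of Corollary 1.9: in the generic case `Re δ(0) ≠ 0`,
the neutral-stability curve `E(ξ)` determined by `Re λ(E(ξ), ξ) = 0` satisfies
`E(ξ)/ξ → Re δ(0) / ∂ε Re β(0)` as `ξ → 0`; in particular `E(ξ) ≠ 0` for small `ξ ≠ 0`. -/
theorem stmt_3 (τs : ℝ → ℝ) (β δ : ℝ → ℂ) (r : ℝ × ℝ → ℂ)
    (hτ : ContDiff ℝ 1 τs) (hβ : ContDiff ℝ 1 β) (hδ : ContDiff ℝ 1 δ)
    (hr : ContDiff ℝ 1 r)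
    (lam : ℝ → ℝ → ℂ)
    (hlam : lam = fun (ε ξ : ℝ) =>
      Complex.I * (ξ : ℂ) * (τs ε : ℂ) - (ξ : ℂ)^2 * β ε + δ ε * (ξ : ℂ)^3
        + r (ε, ξ) * (ξ : ℂ)^4)
    (hβ0 : (β 0).re = 0)
    (hβ' : deriv (fun ε => (β ε).re) 0 < 0)
    (hδ0 : (δ 0).re ≠ 0)
    (ξ₀ : ℝ) (hξ₀ : 0 < ξ₀) (E : ℝ → ℝ)
    (hE : ContDiffOn ℝ 1 E (Set.Ioo (-ξ₀) ξ₀)) (hE0 : E 0 = 0)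
    (hEroot : ∀ ξ : ℝ, |ξ| < ξ₀ → (lam (E ξ) ξ).re = 0) :
    Filter.Tendsto (fun ξ : ℝ => E ξ / ξ) (nhdsWithin 0 {(0:ℝ)}ᶜ)
      (nhds ((δ 0).re / deriv (fun ε => (β ε).re) 0)) ∧
    ∃ ξ₁ > (0:ℝ), ∀ ξ : ℝ, ξ ≠ 0 → |ξ| < ξ₁ → E ξ ≠ 0 :=
  stmt_3_general τs β δ r hδ hr lam hlam hβ0 hβ' hδ0 ξ₀ hξ₀ E hE hE0 hEroot
end

section
/- Fix a > 0. Define g(z) := π^{−1/2} e^{−z²}, errfn(z) := ∫_{−∞}^{z} g(w) dw, and for t > 0, y ∈ ℝ, e(y, t) := errfn((y + a t)/√(4(t+1))) − errfn((y − a t)/√(4(t+1))). Then for each p ∈ [1, ∞] there is a constant C > 0 such that for all t > 0, the L^p norm in y over ℝ of ∂_t e(·, t) satisfies ‖∂_t e(·, t)‖_{L^p(ℝ)} ≤ C t^{−(1/2)(1 − 1/p)}. -/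
/-!
With `s = (4 (t + 1))^{-1/2}` and `z± = (y ± a t) s`, the chain rule gives
`∂ₜ e = g(z₊) (a s - 2 z₊ s²) - g(z₋) (-a s - 2 z₋ s²)`. Since `|z| e^{-z²} ≤ e^{-z²/2}` and
`s ≤ 1/2`, each term is at most a constant times the Gaussian bump `s e^{-z±²/2}`, of height `s`
and `L¹`-mass `√(2π)` in `y`. So `‖∂ₜ e‖_∞ = O(s)` and `‖∂ₜ e‖₁ = O(1)`, and the interpolation
`‖f‖_p ≤ ‖f‖_∞^{1-1/p} ‖f‖₁^{1/p}` gives `O(s^{1-1/p})`, while `s ≤ t^{-1/2}`.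
-/

open Real MeasureTheory Set
open scoped ENNReal

section Interpolation

variable {α E : Type*} [MeasurableSpace α] {μ : Measure α} [NormedAddCommGroup E]

theorem eLpNorm_le_eLpNorm_top_rpow_mul_eLpNorm_one_rpow {f : α → E}
    (hf : AEStronglyMeasurable f μ) {p : ℝ≥0∞} (hp : 1 ≤ p) :
    eLpNorm f p μ ≤ eLpNorm f ∞ μ ^ (1 - 1 / p.toReal) * eLpNorm f 1 μ ^ (1 / p.toReal) := by
  rcases eq_or_ne p ∞ with rfl | hp_top
  · simp
  set q := p.toReal
  have hq : 1 ≤ q := by simpa using ENNReal.toReal_mono hp_top hp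
  set M := eLpNorm f ∞ μ
  have hpow : ∀ᵐ x ∂μ, ‖f x‖ₑ ^ q ≤ M ^ (q - 1) * ‖f x‖ₑ := by
    filter_upwards [eLpNorm_exponent_top (f := f) (μ := μ) ▸ enorm_ae_le_eLpNormEssSup f μ]
      with x hx
    calc ‖f x‖ₑ ^ q = ‖f x‖ₑ ^ (q - 1) * ‖f x‖ₑ ^ (1 : ℝ) := by
          rw [← ENNReal.rpow_add_of_nonneg _ _ (by linarith) zero_le_one, sub_add_cancel]
      _ ≤ M ^ (q - 1) * ‖f x‖ₑ := by
          rw [ENNReal.rpow_one]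
          gcongr
  rw [eLpNorm_eq_lintegral_rpow_enorm_toReal (by positivity) hp_top,
    eLpNorm_one_eq_lintegral_enorm]
  calc (∫⁻ x, ‖f x‖ₑ ^ q ∂μ) ^ (1 / q)
      ≤ (∫⁻ x, M ^ (q - 1) * ‖f x‖ₑ ∂μ) ^ (1 / q) := by
        gcongr ?_ ^ _
        exact lintegral_mono_ae hpow
    _ = M ^ (1 - 1 / q) * (∫⁻ x, ‖f x‖ₑ ∂μ) ^ (1 / q) := by
      rw [lintegral_const_mul'' _ hf.enorm, ENNReal.mul_rpow_of_nonneg _ _ (by positivity),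
        ← ENNReal.rpow_mul]
      congr 2
      field_simp

end Interpolation

theorem hasDerivAt_integral_Iic {E : Type*} [NormedAddCommGroup E] [NormedSpace ℝ E]
    [CompleteSpace E] {f : ℝ → E} (hf : Integrable f) (hc : Continuous f) (x : ℝ) :
    HasDerivAt (fun z => ∫ w in Iic z, f w) (f x) x := by
  have hsplit :
      (fun z => ∫ w in Iic z, f w) = fun z => (∫ w in Iic 0, f w) + ∫ w in 0..z, f w := by
    funext z
    rw [← intervalIntegral.integral_Iic_sub_Iic hf.integrableOn hf.integrableOn, add_sub_cancel]
  rw [hsplit]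
  exact (intervalIntegral.integral_hasDerivAt_right hf.intervalIntegrable
    (hc.stronglyMeasurableAtFilter _ _) hc.continuousAt).const_add _

theorem HasDerivAt.div_sqrt_four_mul_add_one {u : ℝ → ℝ} {b t : ℝ} (hu : HasDerivAt u b t)
    (ht : -1 < t) :
    HasDerivAt (fun τ => u τ / √(4 * (τ + 1)))
      (b * (√(4 * (t + 1)))⁻¹
        - 2 * (u t * (√(4 * (t + 1)))⁻¹) * (√(4 * (t + 1)))⁻¹ ^ 2) t := by
  have hpos : 0 < 4 * (t + 1) := by linarith
  have hsqrt : HasDerivAt (fun τ => √(4 * (τ + 1))) (1 / (2 * √(4 * (t + 1))) * 4) t :=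
    (Real.hasDerivAt_sqrt hpos.ne').comp t
      (((hasDerivAt_id t).add_const 1).const_mul 4 |>.congr_deriv (by simp))
  refine (hu.div hsqrt (Real.sqrt_pos.mpr hpos).ne').congr_deriv ?_
  field_simp
  ring_nf

/-- `erfDensity`, `errFn` and `errKernel a` are the `g`, `errfn` and `e` of `stmt_7`. -/
noncomputable def erfDensity (z : ℝ) : ℝ := π ^ (-(1:ℝ)/2) * exp (-z^2)

noncomputable def errFn (z : ℝ) : ℝ := ∫ w in Iic z, erfDensity w

noncomputable def errKernel (a y t : ℝ) : ℝ :=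
  errFn ((y + a*t) / √(4*(t+1))) - errFn ((y - a*t) / √(4*(t+1)))

theorem continuous_erfDensity : Continuous erfDensity := by
  unfold erfDensity; fun_prop

theorem integrable_erfDensity : Integrable erfDensity := by
  unfold erfDensity
  simpa using (integrable_exp_neg_mul_sq one_pos).const_mul (π ^ (-(1:ℝ)/2))

theorem erfDensity_nonneg (z : ℝ) : 0 ≤ erfDensity z := by
  unfold erfDensity; positivity

theorem hasDerivAt_errFn (z : ℝ) : HasDerivAt errFn (erfDensity z) z :=
  hasDerivAt_integral_Iic integrable_erfDensity continuous_erfDensity z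

theorem hasDerivAt_errKernel (a y : ℝ) {t : ℝ} (ht : -1 < t) :
    let s := (√(4 * (t + 1)))⁻¹
    HasDerivAt (errKernel a y)
      (erfDensity ((y + a * t) * s) * (a * s - 2 * ((y + a * t) * s) * s ^ 2)
        - erfDensity ((y - a * t) * s) * (-a * s - 2 * ((y - a * t) * s) * s ^ 2)) t := by
  intro s
  have hplus : HasDerivAt (fun τ => y + a * τ) a t := by
    simpa using ((hasDerivAt_id t).const_mul a).const_add y
  have hminus : HasDerivAt (fun τ => y - a * τ) (-a) t := by
    simpa using ((hasDerivAt_id t).const_mul a).const_sub y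
  exact ((hasDerivAt_errFn _).comp t (hplus.div_sqrt_four_mul_add_one ht)).sub
    ((hasDerivAt_errFn _).comp t (hminus.div_sqrt_four_mul_add_one ht))

theorem abs_mul_exp_neg_sq_le (z : ℝ) : |z| * exp (-z ^ 2) ≤ exp (-z ^ 2 / 2) := by
  have hz : |z| ≤ exp (z ^ 2 / 2) := by
    nlinarith [sq_nonneg (|z| - 1), sq_abs z, add_one_le_exp (z ^ 2 / 2)]
  calc |z| * exp (-z ^ 2) ≤ exp (z ^ 2 / 2) * exp (-z ^ 2) := by gcongr
    _ = exp (-z ^ 2 / 2) := by rw [← exp_add]; ring_nf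

theorem abs_erfDensity_mul_le (b z : ℝ) {s : ℝ} (hs : 0 < s) (hs2 : s ≤ 1 / 2) :
    |erfDensity z * (b * s - 2 * z * s ^ 2)|
      ≤ π ^ (-(1:ℝ)/2) * (|b| + 1) * s * exp (-z ^ 2 / 2) := by
  have hexp : exp (-z ^ 2) ≤ exp (-z ^ 2 / 2) := exp_le_exp.mpr (by nlinarith [sq_nonneg z])
  have hfactor : |b * s - 2 * z * s ^ 2| ≤ |b| * s + 2 * s ^ 2 * |z| := by
    calc |b * s - 2 * z * s ^ 2| ≤ |b * s| + |2 * z * s ^ 2| := abs_sub _ _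
      _ = |b| * s + 2 * s ^ 2 * |z| := by
        rw [abs_mul, abs_mul, abs_mul, abs_of_pos hs, abs_of_nonneg (sq_nonneg s)]
        norm_num
        ring
  have hπ : 0 ≤ π ^ (-(1:ℝ)/2) := by positivity
  rw [abs_mul, abs_of_nonneg (erfDensity_nonneg z), erfDensity]
  calc π ^ (-(1:ℝ)/2) * exp (-z ^ 2) * |b * s - 2 * z * s ^ 2|
      ≤ π ^ (-(1:ℝ)/2) * (|b| * s * exp (-z ^ 2) + 2 * s ^ 2 * (|z| * exp (-z ^ 2))) := by
        nlinarith [mul_le_mul_of_nonneg_left hfactor (mul_nonneg hπ (exp_pos (-z ^ 2)).le)]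
    _ ≤ π ^ (-(1:ℝ)/2) * (|b| * s * exp (-z ^ 2 / 2) + s * exp (-z ^ 2 / 2)) := by
        have h2s : 2 * s ^ 2 ≤ s := by nlinarith
        gcongr _ * (_ * _ * ?_ + ?_)
        calc 2 * s ^ 2 * (|z| * exp (-z ^ 2)) ≤ 2 * s ^ 2 * exp (-z ^ 2 / 2) := by
              gcongr; exact abs_mul_exp_neg_sq_le z
          _ ≤ s * exp (-z ^ 2 / 2) := by gcongr
    _ = π ^ (-(1:ℝ)/2) * (|b| + 1) * s * exp (-z ^ 2 / 2) := by ring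

theorem inv_sqrt_four_mul_add_one_le_half {t : ℝ} (ht : 0 ≤ t) : (√(4 * (t + 1)))⁻¹ ≤ 1 / 2 := by
  rw [one_div, show (2:ℝ) = √4 by rw [show (4:ℝ) = 2 ^ 2 by norm_num, sqrt_sq zero_le_two]]
  gcongr
  linarith

theorem abs_deriv_errKernel_le (a y : ℝ) {t : ℝ} (ht : 0 ≤ t) :
    let s := (√(4 * (t + 1)))⁻¹
    |deriv (errKernel a y) t| ≤ π ^ (-(1:ℝ)/2) * (|a| + 1) * s
      * (exp (-((y - -(a * t)) * s) ^ 2 / 2) + exp (-((y - a * t) * s) ^ 2 / 2)) := by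
  intro s
  have hs : 0 < s := by positivity
  have hs_half : s ≤ 1 / 2 := inv_sqrt_four_mul_add_one_le_half ht
  rw [(hasDerivAt_errKernel a y (by linarith)).deriv, sub_neg_eq_add]
  have hplus := abs_erfDensity_mul_le a ((y + a * t) * s) hs hs_half
  have hminus := abs_erfDensity_mul_le (-a) ((y - a * t) * s) hs hs_half
  rw [abs_neg] at hminus
  calc _ ≤ _ := abs_sub _ _
    _ ≤ _ := add_le_add hplus hminus
    _ = _ := by ring

theorem ENNReal.one_div_toReal_le_one {p : ℝ≥0∞} (hp : 1 ≤ p) : 1 / p.toReal ≤ 1 := by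
  rw [one_div, ← ENNReal.toReal_inv]
  exact ENNReal.toReal_le_of_le_ofReal zero_le_one (by simpa using ENNReal.inv_le_one.mpr hp)

theorem integrable_exp_neg_sq_mul_sub_div_two {s : ℝ} (hs : 0 < s) (c : ℝ) :
    Integrable fun y => exp (-((y - c) * s) ^ 2 / 2) := by
  have h := (integrable_exp_neg_mul_sq (by positivity : 0 < s ^ 2 / 2)).comp_sub_right c
  refine h.congr (ae_of_all _ fun y => ?_)
  ring_nf

theorem integral_exp_neg_sq_mul_sub_div_two {s : ℝ} (hs : 0 < s) (c : ℝ) :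
    ∫ y, exp (-((y - c) * s) ^ 2 / 2) = √(2 * π) / s := by
  rw [integral_sub_right_eq_self (fun x => exp (-(x * s) ^ 2 / 2)) c]
  have hgauss := integral_gaussian (s ^ 2 / 2)
  have hrw : ∀ x : ℝ, -(x * s) ^ 2 / 2 = -(s ^ 2 / 2) * x ^ 2 := fun x => by ring
  simp_rw [hrw, hgauss]
  have hsq : π / (s ^ 2 / 2) = (√(2 * π) / s) ^ 2 := by
    rw [div_pow, sq_sqrt (by positivity)]
    field_simp
  rw [hsq, sqrt_sq (by positivity)]

theorem eLpNorm_le_of_abs_le_gaussian_pair {f : ℝ → ℝ} {K s c₁ c₂ : ℝ} (hK : 0 ≤ K)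
    (hs : 0 < s)
    (hf : ∀ y, |f y|
      ≤ K * s * (exp (-((y - c₁) * s) ^ 2 / 2) + exp (-((y - c₂) * s) ^ 2 / 2)))
    {p : ℝ≥0∞} (hp : 1 ≤ p) :
    eLpNorm f p volume ≤ ENNReal.ofReal (2 * K * s) ^ (1 - 1 / p.toReal)
      * ENNReal.ofReal (2 * K * √(2 * π)) ^ (1 / p.toReal) := by
  set B : ℝ → ℝ := fun y =>
    K * s * (exp (-((y - c₁) * s) ^ 2 / 2) + exp (-((y - c₂) * s) ^ 2 / 2))
  have hB_nonneg : 0 ≤ B := fun y => by positivity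
  have hB_int : Integrable B :=
    ((integrable_exp_neg_sq_mul_sub_div_two hs c₁).add
      (integrable_exp_neg_sq_mul_sub_div_two hs c₂)).const_mul _
  have hB_top : eLpNorm B ∞ volume ≤ ENNReal.ofReal (2 * K * s) := by
    rw [eLpNorm_exponent_top]
    refine eLpNormEssSup_le_of_ae_bound (ae_of_all _ fun y => ?_)
    have h₁ : exp (-((y - c₁) * s) ^ 2 / 2) ≤ 1 :=
      exp_le_one_iff.mpr (by linarith [sq_nonneg ((y - c₁) * s)])
    have h₂ : exp (-((y - c₂) * s) ^ 2 / 2) ≤ 1 :=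
      exp_le_one_iff.mpr (by linarith [sq_nonneg ((y - c₂) * s)])
    rw [norm_of_nonneg (hB_nonneg y)]
    nlinarith [mul_nonneg hK hs.le]
  have hB_one : eLpNorm B 1 volume = ENNReal.ofReal (2 * K * √(2 * π)) := by
    rw [eLpNorm_one_eq_lintegral_enorm, lintegral_enorm_of_nonneg hB_nonneg,
      ← ofReal_integral_eq_lintegral_ofReal hB_int (ae_of_all _ hB_nonneg)]
    simp only [B]
    rw [integral_const_mul, integral_add (integrable_exp_neg_sq_mul_sub_div_two hs c₁)
      (integrable_exp_neg_sq_mul_sub_div_two hs c₂), integral_exp_neg_sq_mul_sub_div_two hs,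
      integral_exp_neg_sq_mul_sub_div_two hs]
    congr 1
    field_simp
    ring
  have hθ : 0 ≤ 1 - 1 / p.toReal := sub_nonneg.mpr (ENNReal.one_div_toReal_le_one hp)
  calc eLpNorm f p volume ≤ eLpNorm B p volume := eLpNorm_mono_real fun y => hf y
    _ ≤ eLpNorm B ∞ volume ^ (1 - 1 / p.toReal) * eLpNorm B 1 volume ^ (1 / p.toReal) :=
      eLpNorm_le_eLpNorm_top_rpow_mul_eLpNorm_one_rpow hB_int.aestronglyMeasurable hp
    _ ≤ _ := by rw [hB_one]; gcongr

theorem stmt_7_general (a : ℝ) (p : ENNReal) (hp : 1 ≤ p) :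
    let g : ℝ → ℝ := fun z => Real.pi ^ (-(1:ℝ)/2) * Real.exp (-z^2)
    let errfn : ℝ → ℝ := fun z => ∫ w in Set.Iic z, g w
    let e : ℝ → ℝ → ℝ := fun y t =>
      errfn ((y + a*t) / Real.sqrt (4*(t+1))) - errfn ((y - a*t) / Real.sqrt (4*(t+1)))
    ∃ C > (0:ℝ), ∀ t : ℝ, 0 < t →
      MeasureTheory.eLpNorm (fun y => deriv (fun t' => e y t') t) p MeasureTheory.volume
        ≤ ENNReal.ofReal (C * t ^ (-(1/2 : ℝ) * (1 - 1/p.toReal))) := by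
  change ∃ C > (0:ℝ), ∀ t : ℝ, 0 < t → eLpNorm (fun y => deriv (errKernel a y) t) p volume
    ≤ ENNReal.ofReal (C * t ^ (-(1/2 : ℝ) * (1 - 1/p.toReal)))
  set θ := 1 - 1 / p.toReal
  have hθ : 0 ≤ θ := sub_nonneg.mpr (ENNReal.one_div_toReal_le_one hp)
  set K := π ^ (-(1:ℝ)/2) * (|a| + 1)
  have hK : 0 < K := by positivity
  refine ⟨(2 * K) ^ θ * (2 * K * √(2 * π)) ^ (1 / p.toReal), by positivity, fun t ht => ?_⟩
  have hs_le : (√(4 * (t + 1)))⁻¹ ≤ t ^ (-(1/2 : ℝ)) := by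
    rw [rpow_neg ht.le, ← sqrt_eq_rpow]
    gcongr
    linarith
  set s := (√(4 * (t + 1)))⁻¹
  have hs : 0 < s := by positivity
  calc eLpNorm (fun y => deriv (errKernel a y) t) p volume
      ≤ ENNReal.ofReal (2 * K * s) ^ θ * ENNReal.ofReal (2 * K * √(2 * π)) ^ (1 / p.toReal) :=
        eLpNorm_le_of_abs_le_gaussian_pair hK.le hs (abs_deriv_errKernel_le a · ht.le) hp
    _ ≤ ENNReal.ofReal (2 * K * t ^ (-(1/2 : ℝ))) ^ θ
          * ENNReal.ofReal (2 * K * √(2 * π)) ^ (1 / p.toReal) := by gcongr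
    _ = _ := by
      rw [ENNReal.ofReal_rpow_of_nonneg (by positivity) hθ,
        ENNReal.ofReal_rpow_of_nonneg (by positivity) (by positivity),
        ← ENNReal.ofReal_mul (by positivity),
        mul_rpow (by positivity) (by positivity), ← rpow_mul ht.le]
      ring_nf

/-- Time-derivative bound of Corollary 2.4: `‖∂_t e(·,t)‖_{L^p(ℝ)} ≤ C t^{-(1/2)(1-1/p)}`
for the error-function kernel `e(y,t)`. -/
theorem stmt_7 (a : ℝ) (ha : 0 < a) (p : ENNReal) (hp : 1 ≤ p) :
    let g : ℝ → ℝ := fun z => Real.pi ^ (-(1:ℝ)/2) * Real.exp (-z^2)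
    let errfn : ℝ → ℝ := fun z => ∫ w in Set.Iic z, g w
    let e : ℝ → ℝ → ℝ := fun y t =>
      errfn ((y + a*t) / Real.sqrt (4*(t+1))) - errfn ((y - a*t) / Real.sqrt (4*(t+1)))
    ∃ C > (0:ℝ), ∀ t : ℝ, 0 < t →
      MeasureTheory.eLpNorm (fun y => deriv (fun t' => e y t') t) p MeasureTheory.volume
        ≤ ENNReal.ofReal (C * t ^ (-(1/2 : ℝ) * (1 - 1/p.toReal))) :=
  stmt_7_general a p hp
end
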